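/- arXiv:0909.3467 — 2 statements merged into one kernel-verified Lean document; each statement's English description precedes it below -/
import Mathlib

section
/- Let p ≥ 1/2 and define N(u)_j = |u_j|^{2p}u_j on ℓ²(ℤⁿ, ℝ). Then N is Fréchet differentiable at every u ∈ ℓ², with derivative N'(u)[h]_j = (2p+1)|u_j|^{2p} h_j, and the operator norm satisfies ‖N'(u)‖_{L(ℓ²,ℓ²)} ≤ C_p ‖u‖_{ℓ²}^{2p} for a constant C_p depending only on p. -/
/-!
Write `q = 2p ≥ 1` and `φ(t) = |t|^q t`, so that `φ'(t) = (q+1)|t|^q`. On `[0, R]` the map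
`x ↦ x^q` is `q R^(q-1)`-Lipschitz, so by the mean value theorem the Taylor remainder of `φ`
satisfies `|φ(a+b) - φ(a) - φ'(a) b| ≤ (q+1) q (|a|+|b|)^(q-1) b²`. Every coordinate of an
`ℓ²` sequence is bounded by its norm, hence summing gives
`‖N(u+h) - N(u) - N'(u)h‖ ≤ (q+1) q (‖u‖+‖h‖)^(q-1) ‖h‖ · ‖h‖ = o(‖h‖)`, and in the same way
`‖N'(u)h‖ ≤ (q+1) ‖u‖^q ‖h‖`.
-/

open Filter Topology Asymptotics Set

theorem hasDerivAt_abs_rpow_mul_self {q : ℝ} (hq : 0 < q) (t : ℝ) :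
    HasDerivAt (fun s : ℝ => |s| ^ q * s) ((q + 1) * |t| ^ q) t := by
  rcases eq_or_ne t 0 with rfl | ht
  · have hsmall : Tendsto (fun s : ℝ => |s| ^ q) (𝓝 0) (𝓝 0) :=
      ((Real.continuous_rpow_const hq.le).comp continuous_abs).tendsto' 0 0
        (by simp [Real.zero_rpow hq.ne'])
    rw [hasDerivAt_iff_isLittleO_nhds_zero]
    simpa [Real.zero_rpow hq.ne'] using
      (isLittleO_one_iff ℝ).2 hsmall |>.mul_isBigO (isBigO_refl (fun s : ℝ => s) _)
  · have h : HasDerivAt (fun s : ℝ => |s| ^ q * s)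
        (q * |t| ^ (q - 1) * SignType.sign t * t + |t| ^ q * 1) t :=
      ((Real.hasDerivAt_rpow_const (Or.inl (abs_ne_zero.2 ht))).comp t
        (hasDerivAt_abs ht)).mul (hasDerivAt_id t)
    refine h.congr_deriv ?_
    rw [mul_assoc _ _ t, sign_mul_self, mul_assoc, Real.rpow_sub_one (abs_ne_zero.2 ht),
      div_mul_cancel₀ _ (abs_ne_zero.2 ht)]
    ring

theorem abs_rpow_sub_rpow_le_of_mem_Icc {q R x y : ℝ} (hq : 1 ≤ q) (hx : x ∈ Icc 0 R)
    (hy : y ∈ Icc 0 R) : |x ^ q - y ^ q| ≤ q * R ^ (q - 1) * |x - y| := by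
  refine (convex_Icc 0 R).norm_image_sub_le_of_norm_hasDerivWithin_le
    (fun s _ => (Real.hasDerivAt_rpow_const (Or.inr hq)).hasDerivWithinAt) (fun s hs => ?_) hy hx
  rw [Real.norm_eq_abs, abs_of_nonneg (mul_nonneg (by linarith) (Real.rpow_nonneg hs.1 _))]
  exact mul_le_mul_of_nonneg_left (Real.rpow_le_rpow hs.1 hs.2 (by linarith)) (by linarith)

theorem abs_taylor_remainder_abs_rpow_mul_self_le {q : ℝ} (hq : 1 ≤ q) (a b : ℝ) :
    |(|a + b| ^ q * (a + b) - |a| ^ q * a - (q + 1) * |a| ^ q * b)| ≤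
      (q + 1) * q * (|a| + |b|) ^ (q - 1) * b ^ 2 := by
  have hderiv (t : ℝ) : HasDerivAt (fun s : ℝ => |s| ^ q * s - (q + 1) * |a| ^ q * s)
      ((q + 1) * |t| ^ q - (q + 1) * |a| ^ q) t :=
    ((hasDerivAt_abs_rpow_mul_self (by linarith) t).sub
      ((hasDerivAt_id t).const_mul ((q + 1) * |a| ^ q))).congr_deriv (by ring)
  have hbound : ∀ t ∈ uIcc a (a + b),
      ‖(q + 1) * |t| ^ q - (q + 1) * |a| ^ q‖ ≤ (q + 1) * q * (|a| + |b|) ^ (q - 1) * |b| := by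
    intro t ht
    have hta : |(|t| - |a|)| ≤ |b| := by
      simpa using (abs_abs_sub_abs_le_abs_sub t a).trans (abs_sub_left_of_mem_uIcc ht)
    have hlip := abs_rpow_sub_rpow_le_of_mem_Icc hq
      ⟨abs_nonneg t, by linarith [abs_sub_abs_le_abs_sub t a, le_abs_self (|t| - |a|)]⟩
      ⟨abs_nonneg a, le_add_of_nonneg_right (abs_nonneg b)⟩
    rw [Real.norm_eq_abs, ← mul_sub, abs_mul, abs_of_pos (by linarith : 0 < q + 1), mul_assoc _ q,
      mul_assoc _ (q * _)]
    exact mul_le_mul_of_nonneg_left (hlip.trans (by gcongr)) (by linarith)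
  have hmvt := (convex_uIcc a (a + b)).norm_image_sub_le_of_norm_hasDerivWithin_le
    (fun t _ => (hderiv t).hasDerivWithinAt) hbound left_mem_uIcc right_mem_uIcc
  rw [Real.norm_eq_abs, Real.norm_eq_abs, add_sub_cancel_left] at hmvt
  convert hmvt using 1
  · congr 1; ring
  · rw [← sq_abs b]; ring

section SquareSummable

variable {ι : Type*}

theorem abs_le_sqrt_tsum_sq {f : ι → ℝ} (hf : Summable fun j => f j ^ 2) (j : ι) :
    |f j| ≤ √(∑' i, f i ^ 2) :=
  Real.abs_le_sqrt (hf.le_tsum j fun i _ => sq_nonneg (f i))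

theorem sqrt_tsum_sq_le_of_abs_le {f g : ι → ℝ} {K : ℝ} (hK : 0 ≤ K)
    (hg : Summable fun j => g j ^ 2) (hfg : ∀ j, |f j| ≤ K * |g j|) :
    √(∑' j, f j ^ 2) ≤ K * √(∑' j, g j ^ 2) := by
  have hsq (j : ι) : f j ^ 2 ≤ K ^ 2 * g j ^ 2 := by
    rw [← sq_abs (f j), ← sq_abs (g j), ← mul_pow]
    exact pow_le_pow_left₀ (abs_nonneg _) (hfg j) 2
  rw [← Real.sqrt_sq hK, ← Real.sqrt_mul (sq_nonneg K), ← tsum_mul_left]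
  exact Real.sqrt_le_sqrt <| Summable.tsum_le_tsum hsq
    ((hg.mul_left _).of_nonneg_of_le (fun j => sq_nonneg _) hsq) (hg.mul_left _)

variable {q : ℝ} {u h : ι → ℝ}

theorem sqrt_tsum_sq_mul_abs_rpow_mul_le (hq : 0 ≤ q) {c : ℝ} (hc : 0 ≤ c)
    (hu : Summable fun j => u j ^ 2) (hh : Summable fun j => h j ^ 2) :
    √(∑' j, (c * |u j| ^ q * h j) ^ 2) ≤ c * √(∑' j, u j ^ 2) ^ q * √(∑' j, h j ^ 2) := by
  refine sqrt_tsum_sq_le_of_abs_le (by positivity) hh fun j => ?_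
  rw [abs_mul, abs_mul, abs_of_nonneg hc, abs_of_nonneg (by positivity)]
  gcongr
  exact abs_le_sqrt_tsum_sq hu j

theorem sqrt_tsum_sq_taylor_remainder_abs_rpow_mul_self_le (hq : 1 ≤ q)
    (hu : Summable fun j => u j ^ 2) (hh : Summable fun j => h j ^ 2) :
    √(∑' j, (|u j + h j| ^ q * (u j + h j) - |u j| ^ q * u j - (q + 1) * |u j| ^ q * h j) ^ 2) ≤
      (q + 1) * q * (√(∑' j, u j ^ 2) + √(∑' j, h j ^ 2)) ^ (q - 1) * √(∑' j, h j ^ 2) *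
        √(∑' j, h j ^ 2) := by
  have hq0 : 0 ≤ q - 1 := by linarith
  refine sqrt_tsum_sq_le_of_abs_le (by positivity) hh fun j => ?_
  refine (abs_taylor_remainder_abs_rpow_mul_self_le hq (u j) (h j)).trans ?_
  rw [← sq_abs (h j), sq, ← mul_assoc]
  have huj := abs_le_sqrt_tsum_sq hu j
  have hhj := abs_le_sqrt_tsum_sq hh j
  gcongr

end SquareSummable

/-- For `p ≥ 1/2`, the map `N(u)_j = |u_j|^{2p} u_j` on `ℓ²(ℤⁿ, ℝ)` is
Fréchet differentiable at every `u`, with derivative `N'(u)[h]_j = (2p+1)|u_j|^{2p} h_j`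
(expressed via the o(‖h‖) characterization), and
`‖N'(u)‖_{L(ℓ²,ℓ²)} ≤ C_p ‖u‖_{ℓ²}^{2p}` with `C_p` depending only on `p`. -/
theorem stmt_8 (n : ℕ) (p : ℝ) (hp : 1 / 2 ≤ p) :
    ∃ C > 0, ∀ u : (Fin n → ℤ) → ℝ, Summable (fun j => (u j) ^ 2) →
      (∀ h : (Fin n → ℤ) → ℝ, Summable (fun j => (h j) ^ 2) →
        Real.sqrt (∑' j, ((2 * p + 1) * |u j| ^ (2 * p) * h j) ^ 2) ≤
          C * (Real.sqrt (∑' j, (u j) ^ 2)) ^ (2 * p) * Real.sqrt (∑' j, (h j) ^ 2)) ∧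
      (∀ ε > 0, ∃ δ > 0, ∀ h : (Fin n → ℤ) → ℝ, Summable (fun j => (h j) ^ 2) →
        Real.sqrt (∑' j, (h j) ^ 2) < δ →
        Real.sqrt (∑' j, (|u j + h j| ^ (2 * p) * (u j + h j) - |u j| ^ (2 * p) * u j -
            (2 * p + 1) * |u j| ^ (2 * p) * h j) ^ 2) ≤
          ε * Real.sqrt (∑' j, (h j) ^ 2)) := by
  have hq : 1 ≤ 2 * p := by linarith
  refine ⟨2 * p + 1, by linarith, fun u hu => ⟨fun h hh =>
    sqrt_tsum_sq_mul_abs_rpow_mul_le (by linarith) (by linarith) hu hh, fun ε hε => ?_⟩⟩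
  set M := √(∑' j, u j ^ 2)
  have hgain :
      Tendsto (fun H => (2 * p + 1) * (2 * p) * (M + H) ^ (2 * p - 1) * H) (𝓝 0) (𝓝 0) := by
    have : Continuous fun H => (2 * p + 1) * (2 * p) * (M + H) ^ (2 * p - 1) * H :=
      (((continuous_const.add continuous_id).rpow_const fun _ => Or.inr (by linarith)).const_mul
        _).mul continuous_id
    simpa using this.tendsto 0
  obtain ⟨δ, hδ, hgain_le⟩ := Metric.eventually_nhds_iff.1 (hgain.eventually (ge_mem_nhds hε))
  refine ⟨δ, hδ, fun h hh hhδ =>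
    (sqrt_tsum_sq_taylor_remainder_abs_rpow_mul_self_le hq hu hh).trans ?_⟩
  gcongr
  exact hgain_le (by rwa [Real.dist_eq, sub_zero, abs_of_nonneg (Real.sqrt_nonneg _)])
end

section
/- (Quantitative implicit function theorem with a small perturbation.) Let X, Z be Banach spaces, U ⊂ X open, I = (0, μ₀) ⊂ ℝ. Suppose F₀ : U × I → Z is C¹ with: (i) a family x₀(μ) ∈ U with F₀(x₀(μ), μ) = 0; (ii) ‖∂ₓF₀(x,μ) − ∂ₓF₀(x₀(μ),μ)‖ ≤ L‖x − x₀(μ)‖ uniformly in μ; (iii) ∂ₓF₀(x₀(μ),μ) invertible with ‖[∂ₓF₀(x₀(μ),μ)]⁻¹‖ ≤ C₁ uniformly in μ. Suppose F₁ : U × I → Z is C¹ with ‖F₁(x,μ)‖ ≤ C₂μ^α and ‖∂ₓF₁(x,μ)‖ ≤ C₃μ^β for some α, β > 0, uniformly on U × I. Then there exist δ > 0 and μ* ∈ (0, μ₀) and, for each μ ∈ (0, μ*), a point x(μ) with F₀(x(μ),μ) + F₁(x(μ),μ) = 0 and ‖x(μ) − x₀(μ)‖_X ≤ C μ^α. 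-/
/-! For fixed `μ`, the map `F = F₀(·, μ) + F₁(·, μ)` is approximated on `closedBall (x₀ μ) r`
by the invertible operator `A = ∂ₓF₀(x₀ μ, μ)`: by the mean value inequality
`‖∂ₓF - A‖ ≤ L r + C₃ μ^β` there, while `‖F (x₀ μ)‖ = ‖F₁ (x₀ μ)‖ ≤ C₂ μ^α`. The simplified Newton
iteration `x ↦ x - A⁻¹ F x` then produces a zero of `F` in the ball as soon as
`‖A⁻¹‖ (L r + C₃ μ^β) ≤ 1/2` and `2 ‖A⁻¹‖ C₂ μ^α ≤ r`. With `r = C μ^α` for a suitable `C`, both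
hold for small `μ` because `μ^α, μ^β → 0`. -/

open Metric Set Filter Topology
open scoped NNReal

section NewtonKantorovich

variable {E F : Type*} [NormedAddCommGroup E] [NormedSpace ℝ E]
  [NormedAddCommGroup F] [NormedSpace ℝ F]

theorem Convex.approximatesLinearOn_of_hasFDerivAt {f : E → F} {f' : E → E →L[ℝ] F}
    {φ : E →L[ℝ] F} {s : Set E} {c : ℝ≥0} (hs : Convex ℝ s)
    (hf : ∀ x ∈ s, HasFDerivAt f (f' x) x) (bound : ∀ x ∈ s, ‖f' x - φ‖ ≤ c) :
    ApproximatesLinearOn f φ s c := fun _ hx _ hy =>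
  hs.norm_image_sub_le_of_norm_hasFDerivWithin_le'
    (fun z hz => (hf z hz).hasFDerivWithinAt) bound hy hx

def ContinuousLinearMap.NonlinearRightInverse.ofComp {φ : E →L[ℝ] F} (ψ : F →L[ℝ] E)
    (hφψ : φ.comp ψ = .id ℝ F) (N : ℝ≥0) (hN : ‖ψ‖ ≤ N) : φ.NonlinearRightInverse where
  toFun := ψ
  nnnorm := N
  bound' y := (ψ.le_opNorm y).trans (by gcongr)
  right_inv' y := DFunLike.congr_fun hφψ y

theorem exists_mem_closedBall_eq_zero_of_hasFDerivAt [CompleteSpace E] {f : E → F}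
    {f' : E → E →L[ℝ] F} {φ : E →L[ℝ] F} (φinv : φ.NonlinearRightInverse) {b : E} {r : ℝ}
    {c : ℝ≥0} (hr : 0 ≤ r) (hf : ∀ x ∈ closedBall b r, HasFDerivAt f (f' x) x)
    (hf' : ∀ x ∈ closedBall b r, ‖f' x - φ‖ ≤ c)
    (hfb : ‖f b‖ ≤ ((φinv.nnnorm : ℝ)⁻¹ - c) * r) :
    ∃ x ∈ closedBall b r, f x = 0 :=
  ((convex_closedBall b r).approximatesLinearOn_of_hasFDerivAt hf hf')
    |>.surjOn_closedBall_of_nonlinearRightInverse φinv hr subset_rfl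
    (by rwa [mem_closedBall, dist_comm, dist_zero_right])

theorem exists_mem_closedBall_add_eq_zero [CompleteSpace E] {f₀ f₁ : E → F}
    {D₀ D₁ : E → E →L[ℝ] F} {T : F →L[ℝ] E} {b : E} {r L M : ℝ} {N : ℝ≥0} (hN : 0 < N)
    (hf₀ : ∀ x ∈ closedBall b r, HasFDerivAt f₀ (D₀ x) x)
    (hf₁ : ∀ x ∈ closedBall b r, HasFDerivAt f₁ (D₁ x) x)
    (hb : f₀ b = 0) (hT : (D₀ b).comp T = .id ℝ F) (hTN : ‖T‖ ≤ N)
    (hD₀ : ∀ x ∈ closedBall b r, ‖D₀ x - D₀ b‖ ≤ L * ‖x - b‖)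
    (hD₁ : ∀ x ∈ closedBall b r, ‖D₁ x‖ ≤ M) (hL : 0 ≤ L)
    (hsmall : L * r + M ≤ (2 * N)⁻¹) (hf₁b : ‖f₁ b‖ ≤ r / (2 * N)) :
    ∃ x ∈ closedBall b r, f₀ x + f₁ x = 0 := by
  have hr : 0 ≤ r := by
    have h := (norm_nonneg _).trans hf₁b
    rwa [le_div_iff₀ (by positivity), zero_mul] at h
  have hderiv_near :
      ∀ x ∈ closedBall b r, ‖D₀ x + D₁ x - D₀ b‖ ≤ ((2 * N)⁻¹ : ℝ≥0) := by
    intro x hx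
    calc ‖D₀ x + D₁ x - D₀ b‖ = ‖(D₀ x - D₀ b) + D₁ x‖ := by
          rw [sub_add_eq_add_sub, add_sub_right_comm]
      _ ≤ L * ‖x - b‖ + M := norm_add_le_of_le (hD₀ x hx) (hD₁ x hx)
      _ ≤ L * r + M := by gcongr; exact mem_closedBall_iff_norm.1 hx
      _ ≤ _ := by push_cast; exact hsmall
  have hvalue_small : ‖f₀ b + f₁ b‖ ≤ ((N : ℝ)⁻¹ - ((2 * N)⁻¹ : ℝ≥0)) * r := by
    rw [hb, zero_add]
    refine hf₁b.trans_eq ?_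
    have : (N : ℝ) ≠ 0 := by positivity
    push_cast
    field_simp
    ring
  exact exists_mem_closedBall_eq_zero_of_hasFDerivAt
    (ContinuousLinearMap.NonlinearRightInverse.ofComp T hT N hTN) hr
    (fun x hx => (hf₀ x hx).add (hf₁ x hx)) hderiv_near hvalue_small

end NewtonKantorovich

theorem exists_mem_Ioo_forall_Ioo_of_eventually_nhdsGT {α : Type*} [LinearOrder α]
    [TopologicalSpace α] [OrderTopology α] [DenselyOrdered α] {a b : α} (hab : a < b)
    {p : α → Prop} (h : ∀ᶠ x in 𝓝[>] a, p x) : ∃ c ∈ Ioo a b, ∀ x ∈ Ioo a c, p x := by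
  obtain ⟨b', hab', hb'b⟩ := exists_between hab
  obtain ⟨c, ⟨hac, hcb'⟩, hc⟩ := (mem_nhdsGT_iff_exists_mem_Ioc_Ioo_subset hab').1 h
  exact ⟨c, ⟨hac, hcb'.trans_lt hb'b⟩, hc⟩

theorem tendsto_rpow_nhdsGT_zero {γ : ℝ} (hγ : 0 < γ) :
    Tendsto (fun x : ℝ => x ^ γ) (𝓝[>] 0) (𝓝 0) := by
  simpa [Real.zero_rpow hγ.ne'] using
    ((Real.continuousAt_rpow_const 0 γ (Or.inr hγ.le)).tendsto).mono_left nhdsWithin_le_nhds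

theorem stmt_15_general {X Z : Type*} [NormedAddCommGroup X] [NormedSpace ℝ X] [CompleteSpace X]
    [NormedAddCommGroup Z] [NormedSpace ℝ Z]
    (U : Set X) (μ₀ : ℝ) (hμ₀ : 0 < μ₀)
    (F₀ F₁ : X → ℝ → Z) (DF₀ DF₁ : X → ℝ → X →L[ℝ] Z)
    (x₀ : ℝ → X) (δ₀ L C₁ C₂ C₃ α β : ℝ)
    (hδ₀ : 0 < δ₀) (hα : 0 < α) (hβ : 0 < β)
    (hball : ∀ μ ∈ Set.Ioo (0 : ℝ) μ₀, Metric.ball (x₀ μ) δ₀ ⊆ U)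
    (hDF₀ : ∀ μ ∈ Set.Ioo (0 : ℝ) μ₀, ∀ x ∈ U, HasFDerivAt (fun y => F₀ y μ) (DF₀ x μ) x)
    (hDF₁ : ∀ μ ∈ Set.Ioo (0 : ℝ) μ₀, ∀ x ∈ U, HasFDerivAt (fun y => F₁ y μ) (DF₁ x μ) x)
    (hzero : ∀ μ ∈ Set.Ioo (0 : ℝ) μ₀, F₀ (x₀ μ) μ = 0)
    (hLip : ∀ μ ∈ Set.Ioo (0 : ℝ) μ₀, ∀ x ∈ U,
      ‖DF₀ x μ - DF₀ (x₀ μ) μ‖ ≤ L * ‖x - x₀ μ‖)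
    (Li : ℝ → Z →L[ℝ] X)
    (hLi : ∀ μ ∈ Set.Ioo (0 : ℝ) μ₀,
      (Li μ).comp (DF₀ (x₀ μ) μ) = ContinuousLinearMap.id ℝ X ∧
      (DF₀ (x₀ μ) μ).comp (Li μ) = ContinuousLinearMap.id ℝ Z ∧ ‖Li μ‖ ≤ C₁)
    (hF₁ : ∀ μ ∈ Set.Ioo (0 : ℝ) μ₀, ∀ x ∈ U, ‖F₁ x μ‖ ≤ C₂ * μ ^ α)
    (hDF₁b : ∀ μ ∈ Set.Ioo (0 : ℝ) μ₀, ∀ x ∈ U, ‖DF₁ x μ‖ ≤ C₃ * μ ^ β) :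
    ∃ μ' ∈ Set.Ioo (0 : ℝ) μ₀, ∃ C > 0, ∀ μ ∈ Set.Ioo (0 : ℝ) μ', ∃ x ∈ U,
      F₀ x μ + F₁ x μ = 0 ∧ ‖x - x₀ μ‖ ≤ C * μ ^ α := by
  -- a positive bound on `‖Li μ‖`, so that `K⁻¹` below is not the junk value `0⁻¹`
  set K : ℝ≥0 := C₁.toNNReal + 1
  set C := 2 * K * max C₂ 1
  have hsmall : ∀ᶠ μ in 𝓝[>] 0,
      C * μ ^ α < δ₀ ∧ |L| * (C * μ ^ α) + |C₃| * μ ^ β < (2 * K : ℝ)⁻¹ := by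
    have hr := (tendsto_rpow_nhdsGT_zero hα).const_mul C
    have hc := (hr.const_mul |L|).add ((tendsto_rpow_nhdsGT_zero hβ).const_mul |C₃|)
    simp only [mul_zero, add_zero] at hr hc
    exact (hr.eventually_lt_const hδ₀).and (hc.eventually_lt_const (by positivity))
  obtain ⟨μ', hμ'μ₀, hμ'⟩ := exists_mem_Ioo_forall_Ioo_of_eventually_nhdsGT hμ₀ hsmall
  refine ⟨μ', hμ'μ₀, C, by positivity, fun μ hμ => ?_⟩
  obtain ⟨hrδ₀, hdev⟩ := hμ' μ hμ
  have hμI : μ ∈ Ioo 0 μ₀ := ⟨hμ.1, hμ.2.trans hμ'μ₀.2⟩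
  have hsU : closedBall (x₀ μ) (C * μ ^ α) ⊆ U :=
    (closedBall_subset_ball hrδ₀).trans (hball μ hμI)
  have hLiK : ‖Li μ‖ ≤ K :=
    (hLi μ hμI).2.2.trans ((Real.le_coe_toNNReal C₁).trans (by simp [K]))
  have hμ0 : 0 < μ := hμ.1
  have hK : (K : ℝ) ≠ 0 := by positivity
  have hF₁b : ‖F₁ (x₀ μ) μ‖ ≤ C * μ ^ α / (2 * K) := calc
    ‖F₁ (x₀ μ) μ‖ ≤ C₂ * μ ^ α := hF₁ μ hμI _ (hsU (mem_closedBall_self (by positivity)))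
    _ ≤ max C₂ 1 * μ ^ α := by gcongr; exact le_max_left C₂ 1
    _ = C * μ ^ α / (2 * K) := by simp only [C]; field_simp
  obtain ⟨x, hx, hFx⟩ := exists_mem_closedBall_add_eq_zero (by positivity)
    (fun x hx => hDF₀ μ hμI x (hsU hx)) (fun x hx => hDF₁ μ hμI x (hsU hx)) (hzero μ hμI)
    (hLi μ hμI).2.1 hLiK
    (fun x hx => (hLip μ hμI x (hsU hx)).trans (by gcongr; exact le_abs_self L))
    (fun x hx => (hDF₁b μ hμI x (hsU hx)).trans (by gcongr; exact le_abs_self C₃))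
    (abs_nonneg L) hdev.le hF₁b
  exact ⟨x, hsU hx, hFx, mem_closedBall_iff_norm.1 hx⟩

/-- quantitative implicit function theorem with a small perturbation.
`F₀(x₀(μ), μ) = 0`, `∂ₓF₀` Lipschitz uniformly in `μ`, `∂ₓF₀(x₀(μ),μ)` invertible with
uniformly bounded inverse, and `‖F₁‖ ≤ C₂μ^α`, `‖∂ₓF₁‖ ≤ C₃μ^β`. Then for all small `μ`
there is `x(μ)` with `(F₀+F₁)(x(μ),μ) = 0` and `‖x(μ) − x₀(μ)‖ ≤ Cμ^α`. -/
theorem stmt_15 {X Z : Type*} [NormedAddCommGroup X] [NormedSpace ℝ X] [CompleteSpace X]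
    [NormedAddCommGroup Z] [NormedSpace ℝ Z] [CompleteSpace Z]
    (U : Set X) (hU : IsOpen U) (μ₀ : ℝ) (hμ₀ : 0 < μ₀)
    (F₀ F₁ : X → ℝ → Z) (DF₀ DF₁ : X → ℝ → X →L[ℝ] Z)
    (x₀ : ℝ → X) (δ₀ L C₁ C₂ C₃ α β : ℝ)
    (hδ₀ : 0 < δ₀) (hα : 0 < α) (hβ : 0 < β)
    (hball : ∀ μ ∈ Set.Ioo (0 : ℝ) μ₀, Metric.ball (x₀ μ) δ₀ ⊆ U)
    (hDF₀ : ∀ μ ∈ Set.Ioo (0 : ℝ) μ₀, ∀ x ∈ U, HasFDerivAt (fun y => F₀ y μ) (DF₀ x μ) x)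
    (hDF₁ : ∀ μ ∈ Set.Ioo (0 : ℝ) μ₀, ∀ x ∈ U, HasFDerivAt (fun y => F₁ y μ) (DF₁ x μ) x)
    (hzero : ∀ μ ∈ Set.Ioo (0 : ℝ) μ₀, F₀ (x₀ μ) μ = 0)
    (hLip : ∀ μ ∈ Set.Ioo (0 : ℝ) μ₀, ∀ x ∈ U,
      ‖DF₀ x μ - DF₀ (x₀ μ) μ‖ ≤ L * ‖x - x₀ μ‖)
    (Li : ℝ → Z →L[ℝ] X)
    (hLi : ∀ μ ∈ Set.Ioo (0 : ℝ) μ₀,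
      (Li μ).comp (DF₀ (x₀ μ) μ) = ContinuousLinearMap.id ℝ X ∧
      (DF₀ (x₀ μ) μ).comp (Li μ) = ContinuousLinearMap.id ℝ Z ∧ ‖Li μ‖ ≤ C₁)
    (hF₁ : ∀ μ ∈ Set.Ioo (0 : ℝ) μ₀, ∀ x ∈ U, ‖F₁ x μ‖ ≤ C₂ * μ ^ α)
    (hDF₁b : ∀ μ ∈ Set.Ioo (0 : ℝ) μ₀, ∀ x ∈ U, ‖DF₁ x μ‖ ≤ C₃ * μ ^ β) :
    ∃ μ' ∈ Set.Ioo (0 : ℝ) μ₀, ∃ C > 0, ∀ μ ∈ Set.Ioo (0 : ℝ) μ', ∃ x ∈ U,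
      F₀ x μ + F₁ x μ = 0 ∧ ‖x - x₀ μ‖ ≤ C * μ ^ α :=
  stmt_15_general U μ₀ hμ₀ F₀ F₁ DF₀ DF₁ x₀ δ₀ L C₁ C₂ C₃ α β hδ₀ hα hβ hball hDF₀ hDF₁ hzero hLip
    Li hLi hF₁ hDF₁b
end
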